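/- arXiv:0906.1844 — 6 statements merged into one kernel-verified Lean document; each statement's English description precedes it below -/
import Mathlib

section
/- For every n ≥ 0, the number of symmetric Dyck paths of length 2n equals the central binomial coefficient C(n, ⌊n/2⌋); that is, d_n = C(n, ⌊n/2⌋). -/
/-- Value of a Dyck step: `true` is an up step (+1), `false` a down step (-1). -/
def stepVal (b : Bool) : ℤ := if b then 1 else -1

/-- Partial sum of the first `i` steps of the word `w`. -/
def psum {n : ℕ} (w : Fin n → Bool) (i : ℕ) : ℤ :=
  ∑ j : Fin n, if (j : ℕ) < i then stepVal (w j) else 0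

/-- `d n`: number of symmetric Dyck paths of length `2n`, encoded by their left half,
a word in `{+1,-1}^n` with all partial sums nonnegative. -/
noncomputable def d (n : ℕ) : ℕ := Set.ncard {w : Fin n → Bool | ∀ i ≤ n, 0 ≤ psum w i}

/-!
Let `S w = psum w n` be the final height. A word some of whose partial sums are negative
first visits `-1` at some time `τ`; reversing all steps after `τ` (André's reflection) is an
involution on such words and sends `S` to `-2 - S`. So those with `S ≥ 0` are as many as the
words with `S ≤ -2`, hence, reversing every step, as the words with `S ≥ 2`. Therefore
`d n = #{S ≥ 0} - #{S ≥ 2} = #{S ∈ {0, 1}}`, and since `S = n - 2 · #(down steps)`, the words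
with `S ∈ {0, 1}` are exactly those with `⌊n/2⌋` down steps.
-/

open Finset

lemma card_filter_eq_card_filter_add_card_filter_and_not {α : Type*} [Fintype α]
    (p q : α → Prop) [DecidablePred p] [DecidablePred q] (h : ∀ a, q a → p a) :
    #{a | p a} = #{a | q a} + #{a | p a ∧ ¬ q a} := by
  rw [← card_filter_add_card_filter_not (s := {a | p a}) q, filter_filter, filter_filter]
  congr 2
  exact filter_congr fun a _ => ⟨And.right, fun hq => ⟨h a hq, hq⟩⟩

lemma card_filter_card_false_eq_choose (n k : ℕ) :
    #{w : Fin n → Bool | #{j | w j = false} = k} = n.choose k := by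
  have hsubsets : #(powersetCard k (univ : Finset (Fin n))) = n.choose k := by simp
  rw [← hsubsets]
  refine card_nbij' (fun w => ({j | w j = false} : Finset _)) (fun s j => decide (j ∉ s))
    ?_ ?_ ?_ ?_
  · intro w hw
    simp_all [mem_powersetCard]
  · intro s hs
    simp_all [mem_powersetCard]
  · intro w _
    funext j
    cases hj : w j <;> simp [hj]
  · intro s _
    ext j
    simp

lemma stepVal_not (b : Bool) : stepVal (!b) = -stepVal b := by
  cases b <;> simp [stepVal]

variable {n : ℕ}

lemma psum_zero (w : Fin n → Bool) : psum w 0 = 0 := by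
  simp [psum]

lemma psum_succ (w : Fin n → Bool) {i : ℕ} (h : i < n) :
    psum w (i + 1) = psum w i + stepVal (w ⟨i, h⟩) := by
  have : ({j : Fin n | j < i + 1} : Finset _) =
      insert ⟨i, h⟩ ({j : Fin n | j < i} : Finset _) := by
    ext j
    simp only [mem_filter, mem_univ, true_and, mem_insert, Fin.ext_iff]
    omega
  rw [psum, psum, ← sum_filter, ← sum_filter, this, sum_insert (by simp), add_comm]

lemma psum_eq_sub_two_mul_card_false (w : Fin n → Bool) :
    psum w n = n - 2 * #{j | w j = false} := by
  have hstep (b : Bool) : stepVal b = 1 - 2 * if b = false then 1 else 0 := by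
    cases b <;> simp [stepVal]
  simp only [psum, Fin.is_lt, if_true, hstep, sum_sub_distrib, ← mul_sum, sum_boole]
  simp

def reflectAt (t : ℕ) (w : Fin n → Bool) : Fin n → Bool :=
  fun j => if (j : ℕ) < t then w j else !w j

lemma reflectAt_reflectAt (t : ℕ) (w : Fin n → Bool) : reflectAt t (reflectAt t w) = w := by
  funext j
  by_cases hj : (j : ℕ) < t <;> simp [reflectAt, hj]

lemma psum_reflectAt_of_le (w : Fin n → Bool) {t i : ℕ} (h : i ≤ t) :
    psum (reflectAt t w) i = psum w i := by
  refine sum_congr rfl fun j _ => ?_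
  by_cases hj : (j : ℕ) < i
  · simp [reflectAt, hj, hj.trans_le h]
  · simp [hj]

lemma psum_reflectAt_of_ge (w : Fin n → Bool) {t i : ℕ} (h : t ≤ i) :
    psum (reflectAt t w) i = 2 * psum w t - psum w i := by
  simp only [psum, mul_sum, ← sum_sub_distrib]
  refine sum_congr rfl fun j _ => ?_
  by_cases hjt : (j : ℕ) < t
  · simp [reflectAt, hjt, hjt.trans_le h]; ring
  · by_cases hji : (j : ℕ) < i <;> simp [reflectAt, hjt, hji, stepVal_not]

lemma psum_reflectAt_zero (w : Fin n → Bool) (i : ℕ) : psum (reflectAt 0 w) i = -psum w i := by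
  rw [psum_reflectAt_of_ge w (Nat.zero_le i), psum_zero]
  ring

lemma neg_one_le_stepVal (b : Bool) : -1 ≤ stepVal b := by
  cases b <;> simp [stepVal]

noncomputable def firstNegTime (w : Fin n → Bool) : ℕ := sInf {i | psum w i < 0}

noncomputable def reflect (w : Fin n → Bool) : Fin n → Bool := reflectAt (firstNegTime w) w

lemma psum_nonneg_of_lt_firstNegTime {w : Fin n → Bool} {i : ℕ} (hi : i < firstNegTime w) :
    0 ≤ psum w i :=
  not_lt.1 (Nat.notMem_of_lt_sInf hi)

lemma psum_reflect_of_le (w : Fin n → Bool) {i : ℕ} (hi : i ≤ firstNegTime w) :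
    psum (reflect w) i = psum w i :=
  psum_reflectAt_of_le w hi

section Reflection

variable {w : Fin n → Bool} (hw : ∃ i ≤ n, psum w i < 0)
include hw

lemma firstNegTime_le : firstNegTime w ≤ n := by
  obtain ⟨i, hin, hi⟩ := hw
  exact (Nat.sInf_le hi).trans hin

lemma psum_firstNegTime_neg : psum w (firstNegTime w) < 0 := by
  obtain ⟨i, -, hi⟩ := hw
  exact Nat.sInf_mem (s := {i | psum w i < 0}) ⟨i, hi⟩

lemma psum_firstNegTime : psum w (firstNegTime w) = -1 := by
  have hneg := psum_firstNegTime_neg hw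
  obtain ⟨t, ht⟩ : ∃ t, firstNegTime w = t + 1 := by
    refine Nat.exists_eq_succ_of_ne_zero fun h => ?_
    rw [h, psum_zero] at hneg
    exact hneg.false
  have hprev : 0 ≤ psum w t := psum_nonneg_of_lt_firstNegTime (by omega)
  have htn : t < n := by have := firstNegTime_le hw; omega
  have hstep := neg_one_le_stepVal (w ⟨t, htn⟩)
  rw [ht, psum_succ w htn] at hneg ⊢
  omega

lemma psum_reflect_firstNegTime_neg : psum (reflect w) (firstNegTime w) < 0 := by
  rw [psum_reflect_of_le w le_rfl]
  exact psum_firstNegTime_neg hw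

lemma firstNegTime_reflect : firstNegTime (reflect w) = firstNegTime w := by
  have hmem := psum_reflect_firstNegTime_neg hw
  refine le_antisymm (Nat.sInf_le hmem) (not_lt.1 fun hlt => ?_)
  have hfirst : psum (reflect w) (firstNegTime (reflect w)) < 0 :=
    Nat.sInf_mem (s := {i | psum (reflect w) i < 0}) ⟨_, hmem⟩
  rw [psum_reflect_of_le w hlt.le] at hfirst
  exact (psum_nonneg_of_lt_firstNegTime hlt).not_gt hfirst

lemma reflect_reflect : reflect (reflect w) = w := by
  rw [reflect, firstNegTime_reflect hw, reflect, reflectAt_reflectAt]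

lemma exists_psum_reflect_neg : ∃ i ≤ n, psum (reflect w) i < 0 :=
  ⟨firstNegTime w, firstNegTime_le hw, psum_reflect_firstNegTime_neg hw⟩

lemma psum_reflect_eq_neg_two_sub : psum (reflect w) n = -2 - psum w n := by
  rw [reflect, psum_reflectAt_of_ge w (firstNegTime_le hw), psum_firstNegTime hw]
  ring

end Reflection

lemma card_nonneg_not_forall_nonneg_eq_card_le_neg_two :
    #{w : Fin n → Bool | 0 ≤ psum w n ∧ ¬ ∀ i ≤ n, 0 ≤ psum w i} =
      #{w : Fin n → Bool | psum w n ≤ -2} := by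
  have hbad {w : Fin n → Bool} (h : psum w n ≤ -2) : ∃ i ≤ n, psum w i < 0 :=
    ⟨n, le_rfl, by omega⟩
  refine card_nbij' reflect reflect ?_ ?_ ?_ ?_ <;> intro w hw <;>
    simp only [mem_coe, mem_filter, mem_univ, true_and, not_forall, not_le, exists_prop] at hw ⊢
  · have := psum_reflect_eq_neg_two_sub hw.2
    omega
  · have := psum_reflect_eq_neg_two_sub (hbad hw)
    exact ⟨by omega, exists_psum_reflect_neg (hbad hw)⟩
  · exact reflect_reflect hw.2
  · exact reflect_reflect (hbad hw)

lemma card_le_neg_eq_card_ge (a : ℤ) :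
    #{w : Fin n → Bool | psum w n ≤ -a} = #{w : Fin n → Bool | a ≤ psum w n} := by
  refine card_nbij' (reflectAt 0) (reflectAt 0) ?_ ?_ ?_ ?_ <;> intro w hw <;>
    simp only [mem_coe, mem_filter, mem_univ, true_and, psum_reflectAt_zero,
      reflectAt_reflectAt] at hw ⊢ <;> omega

lemma card_nonneg_eq_card_ge_two_add_choose :
    #{w : Fin n → Bool | 0 ≤ psum w n} =
      #{w : Fin n → Bool | 2 ≤ psum w n} + n.choose (n / 2) := by
  rw [card_filter_eq_card_filter_add_card_filter_and_not _ _ fun w (h : 2 ≤ psum w n) => by omega,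
    ← card_filter_card_false_eq_choose]
  congr 2
  refine filter_congr fun w _ => ?_
  rw [psum_eq_sub_two_mul_card_false]
  omega

/-- The number of symmetric Dyck paths of length `2n` equals the
central binomial coefficient `C(n, ⌊n/2⌋)`. -/
theorem symmetric_dyck_count (n : ℕ) : d n = Nat.choose n (n / 2) := by
  have hd : d n = #{w : Fin n → Bool | ∀ i ≤ n, 0 ≤ psum w i} := by
    rw [d, ← Set.ncard_coe_finset, coe_filter]
    simp only [mem_univ, true_and]
  have hsplit := card_filter_eq_card_filter_add_card_filter_and_not
    (fun w : Fin n → Bool => 0 ≤ psum w n) (fun w => ∀ i ≤ n, 0 ≤ psum w i)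
    fun w h => h n le_rfl
  have hreflect := card_nonneg_not_forall_nonneg_eq_card_le_neg_two (n := n)
  have hsymm := card_le_neg_eq_card_ge (n := n) 2
  have hheight := card_nonneg_eq_card_ge_two_add_choose (n := n)
  omega
end

section
/- (Theorem 3.2) For every n ≥ 0, d_n = ∑_{k=0}^{n} (−1)^{n−k} · C(n,k) · m_k (an identity of integers). -/
/-- Value of a Motzkin step: `0` is up (+1), `1` is horizontal (0), `2` is down (-1). -/
def mval : Fin 3 → ℤ := ![1, 0, -1]

/-- Partial sum of the first `i` steps of the word `w`. -/
def mpsum {n : ℕ} (w : Fin n → Fin 3) (i : ℕ) : ℤ :=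
  ∑ j : Fin n, if (j : ℕ) < i then mval (w j) else 0

/-- `m n`: number of symmetric Motzkin paths of length `2n`, encoded by their left half,
a word in `{+1,0,-1}^n` with all partial sums nonnegative. -/
noncomputable def m (n : ℕ) : ℕ := Set.ncard {w : Fin n → Fin 3 | ∀ i ≤ n, 0 ≤ mpsum w i}

/-!
Let `D_h(n)` and `M_h(n)` count the Dyck and Motzkin words of length `n` that start at height
`h` and never go below `0`. Splitting off the first step gives, for `h ≥ 0`,
`D_h(n+1) = D_{h+1}(n) + D_{h-1}(n)` and `M_h(n+1) = M_{h+1}(n) + M_h(n) + M_{h-1}(n)`, and with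
Pascal's rule these give `M_h(n) = ∑_k C(n,k) D_h(k)` by induction on `n`, for all `h` at once.
Binomial inversion at `h = 0` is the theorem; its kernel
`∑_k (-1)^(n-k) C(n,k) C(k,j) = [n = j]` is the `n`-th forward difference of `x ↦ C(x,j)` at `0`.
-/

open Finset

section

variable {α : Type*}

def prefixSum (f : α → ℤ) {n : ℕ} (w : Fin n → α) (i : ℕ) : ℤ :=
  ∑ j : Fin n, if (j : ℕ) < i then f (w j) else 0

@[simp]
lemma prefixSum_zero (f : α → ℤ) {n : ℕ} (w : Fin n → α) : prefixSum f w 0 = 0 := by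
  simp [prefixSum]

lemma prefixSum_cons_succ (f : α → ℤ) {n : ℕ} (a : α) (w : Fin n → α) (i : ℕ) :
    prefixSum f (Fin.cons a w : Fin (n + 1) → α) (i + 1) = f a + prefixSum f w i := by
  simp [prefixSum, Fin.sum_univ_succ]

noncomputable def meanderCount (f : α → ℤ) (h : ℤ) (n : ℕ) : ℕ :=
  Nat.card {w : Fin n → α // ∀ i ≤ n, 0 ≤ h + prefixSum f w i}

lemma meanderCount_of_neg (f : α → ℤ) {h : ℤ} (hh : h < 0) (n : ℕ) : meanderCount f h n = 0 := by
  rw [meanderCount, Nat.card_eq_zero]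
  exact Or.inl ⟨fun w => by simpa using hh.trans_le (w.2 0 n.zero_le)⟩

lemma meanderCount_zero (f : α → ℤ) {h : ℤ} (hh : 0 ≤ h) : meanderCount f h 0 = 1 := by
  rw [meanderCount, Nat.card_eq_one_iff_unique]
  exact ⟨⟨fun x y => Subtype.ext (Subsingleton.elim _ _)⟩,
    ⟨⟨Fin.elim0, fun i _ => by simp [prefixSum, hh]⟩⟩⟩

lemma forall_le_prefixSum_cons_iff (f : α → ℤ) {h : ℤ} (hh : 0 ≤ h) {n : ℕ} (a : α)
    (w : Fin n → α) :
    (∀ i ≤ n + 1, 0 ≤ h + prefixSum f (Fin.cons a w : Fin (n + 1) → α) i) ↔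
      ∀ i ≤ n, 0 ≤ (h + f a) + prefixSum f w i := by
  constructor
  · intro hw i hi
    simpa [prefixSum_cons_succ, add_assoc] using hw (i + 1) (by omega)
  · rintro hw (_ | i) hi
    · simpa using hh
    · simpa [prefixSum_cons_succ, add_assoc] using hw i (by omega)

lemma meanderCount_succ [Fintype α] (f : α → ℤ) {h : ℤ} (hh : 0 ≤ h) (n : ℕ) :
    meanderCount f h (n + 1) = ∑ a, meanderCount f (h + f a) n := by
  simp only [meanderCount]
  rw [← Nat.card_sigma]
  refine Nat.card_congr <|
    ((Fin.consEquiv fun _ => α).symm.subtypeEquiv fun w => ?_).trans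
      (Equiv.subtypeProdEquivSigmaSubtype fun a w => ∀ i ≤ n, 0 ≤ h + f a + prefixSum f w i)
  rw [← forall_le_prefixSum_cons_iff f hh]
  simp

end

lemma d_eq_meanderCount (n : ℕ) : d n = meanderCount stepVal 0 n := by
  simp only [d, meanderCount, zero_add]
  rfl

lemma m_eq_meanderCount (n : ℕ) : m n = meanderCount mval 0 n := by
  simp only [m, meanderCount, zero_add]
  rfl

lemma meanderCount_stepVal_succ {h : ℤ} (hh : 0 ≤ h) (n : ℕ) :
    meanderCount stepVal h (n + 1) =
      meanderCount stepVal (h + 1) n + meanderCount stepVal (h - 1) n := by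
  simp [meanderCount_succ _ hh, stepVal, sub_eq_add_neg]

lemma meanderCount_mval_succ {h : ℤ} (hh : 0 ≤ h) (n : ℕ) :
    meanderCount mval h (n + 1) =
      meanderCount mval (h + 1) n + meanderCount mval h n + meanderCount mval (h - 1) n := by
  simp [meanderCount_succ _ hh, Fin.sum_univ_three, mval, sub_eq_add_neg]

lemma sum_choose_succ_mul_eq (g : ℕ → ℕ) (n : ℕ) :
    ∑ k ∈ range (n + 2), (n + 1).choose k * g k =
      ∑ k ∈ range (n + 1), n.choose k * (g k + g (k + 1)) := by
  simpa [mul_add, sum_add_distrib] using sum_choose_succ_mul (R := ℕ) (fun k _ => g k) n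

theorem meanderCount_mval_eq_sum_choose_mul (h : ℤ) (n : ℕ) :
    meanderCount mval h n = ∑ k ∈ range (n + 1), n.choose k * meanderCount stepVal h k := by
  induction n generalizing h with
  | zero =>
    rcases lt_or_ge h 0 with hh | hh
    · simp [meanderCount_of_neg _ hh]
    · simp [meanderCount_zero _ hh]
  | succ n ih =>
    rcases lt_or_ge h 0 with hh | hh
    · simp [meanderCount_of_neg _ hh]
    rw [meanderCount_mval_succ hh, ih, ih, ih, sum_choose_succ_mul_eq]
    simp only [meanderCount_stepVal_succ hh, mul_add, sum_add_distrib]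
    ring

lemma sum_neg_one_pow_mul_choose_mul_choose (n j : ℕ) :
    ∑ k ∈ range (n + 1), (-1 : ℤ) ^ (n - k) * n.choose k * k.choose j =
      if n = j then 1 else 0 := by
  simpa [fwdDiff_iter_eq_sum_shift, mul_assoc] using fwdDiff_iter_choose_zero j n

theorem binomial_inversion {G : Type*} [AddCommGroup G] {a b : ℕ → G}
    (hab : ∀ n, a n = ∑ k ∈ range (n + 1), (n.choose k : ℤ) • b k) (n : ℕ) :
    b n = ∑ k ∈ range (n + 1), ((-1 : ℤ) ^ (n - k) * n.choose k) • a k := by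
  have hab' : ∀ k ∈ range (n + 1), a k = ∑ j ∈ range (n + 1), (k.choose j : ℤ) • b j := by
    intro k hk
    rw [hab, sum_subset (range_subset_range.2 (mem_range.1 hk))]
    intro j _ hj
    simp [Nat.choose_eq_zero_of_lt (by simpa using hj)]
  symm
  calc ∑ k ∈ range (n + 1), ((-1 : ℤ) ^ (n - k) * n.choose k) • a k
      = ∑ k ∈ range (n + 1), ∑ j ∈ range (n + 1),
          ((-1 : ℤ) ^ (n - k) * n.choose k * k.choose j) • b j :=
        sum_congr rfl fun k hk => by simp_rw [hab' k hk, smul_sum, smul_smul]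
    _ = ∑ j ∈ range (n + 1), (if n = j then 1 else 0 : ℤ) • b j := by
        rw [sum_comm]
        simp_rw [← sum_smul, sum_neg_one_pow_mul_choose_mul_choose]
    _ = b n := by simp

/-- **Theorem 3.2.** `d_n = ∑_{k=0}^n (-1)^{n-k} C(n,k) m_k`. -/
theorem dyck_eq_alternating_binomial_sum_motzkin (n : ℕ) :
    (d n : ℤ) = ∑ k ∈ Finset.range (n + 1),
      (-1 : ℤ) ^ (n - k) * Nat.choose n k * m k := by
  have motzkin_eq : ∀ n, (m n : ℤ) = ∑ k ∈ range (n + 1), (n.choose k : ℤ) • (d k : ℤ) := by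
    intro n
    rw [m_eq_meanderCount, meanderCount_mval_eq_sum_choose_mul]
    simp [d_eq_meanderCount]
  simpa using binomial_inversion motzkin_eq n
end

section
/- (Theorem 4.2) For every n ≥ 0, ∑_{k=0}^{n} d_{n,k} = C(n, ⌊n/2⌋). -/
/-!
Reflecting `k ↦ n - k`, only the indices `k = n - 2j` with `j ≤ n / 2` contribute, and for these
the ballot number is the difference `C(n, j) - C(n, j - 1)` of consecutive binomial coefficients
below the middle: `(k + 1) C(n + 1, j) = (n + 1) (C(n, j) - C(n, j - 1))` follows from Pascal's
rule and `j C(n, j) = (n - j + 1) C(n, j - 1)`. The sum therefore telescopes to `C(n, ⌊n/2⌋)`.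
-/

/-- The ballot numbers `d_{n,k} = ((k+1)/(n+1)) * C(n+1, (n-k)/2)` when `k ≤ n` and
`n ≡ k (mod 2)`, and `0` otherwise. -/
def dnk (n k : ℕ) : ℕ :=
  if k ≤ n ∧ (n - k) % 2 = 0 then (k + 1) * Nat.choose (n + 1) ((n - k) / 2) / (n + 1)
  else 0

open Finset

theorem Finset.sum_range_succ_eq_sum_range_two_mul {M : Type*} [AddCommMonoid M]
    (f : ℕ → M) (n : ℕ) (hf : ∀ k ≤ n, Odd k → f k = 0) :
    ∑ k ∈ range (n + 1), f k = ∑ j ∈ range (n / 2 + 1), f (2 * j) := by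
  have hsub : (range (n / 2 + 1)).image (2 * ·) ⊆ range (n + 1) := by
    intro k hk
    simp only [mem_image, mem_range] at hk ⊢
    omega
  rw [← sum_subset hsub, sum_image fun a _ b _ h => by omega]
  intro k hk hk'
  refine hf k (by simpa using hk) (Nat.not_even_iff_odd.mp fun ⟨j, hj⟩ => hk' ?_)
  simp only [mem_image, mem_range] at hk ⊢
  exact ⟨j, by omega, by omega⟩

theorem Nat.sub_mul_choose_succ_add (n i : ℕ) (h : 2 * i < n) :
    (n - 2 * i - 1) * (n + 1).choose (i + 1) + (n + 1) * n.choose i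
      = (n + 1) * n.choose (i + 1) := by
  obtain ⟨c, rfl⟩ : ∃ c, n = c + 2 * i + 1 := ⟨n - (2 * i + 1), by omega⟩
  have ratio := Nat.choose_succ_right_eq (c + 2 * i + 1) i
  rw [show c + 2 * i + 1 - i = c + i + 1 by omega] at ratio
  rw [Nat.choose_succ_succ, show c + 2 * i + 1 - 2 * i - 1 = c by omega]
  nlinarith [ratio]

theorem dnk_self (n : ℕ) : dnk n n = 1 := by
  simp [dnk, Nat.div_self (Nat.succ_pos n)]

theorem dnk_sub_two_mul_succ (n i : ℕ) (h : 2 * (i + 1) ≤ n) :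
    dnk n (n - 2 * (i + 1)) = n.choose (i + 1) - n.choose i := by
  have key := Nat.sub_mul_choose_succ_add n i (by omega)
  rw [dnk, if_pos (by omega), show n - 2 * (i + 1) + 1 = n - 2 * i - 1 by omega,
    show (n - (n - 2 * (i + 1))) / 2 = i + 1 by omega]
  apply Nat.div_eq_of_eq_mul_right (Nat.succ_pos n)
  rw [Nat.mul_sub, ← key, Nat.add_sub_cancel]

theorem sum_dnk_sub_two_mul (n m : ℕ) (h : 2 * m ≤ n) :
    ∑ j ∈ range (m + 1), dnk n (n - 2 * j) = n.choose m := by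
  induction m with
  | zero => simp [dnk_self]
  | succ i ih =>
    have mono : n.choose i ≤ n.choose (i + 1) := Nat.choose_le_succ_of_lt_half_left (by omega)
    rw [sum_range_succ, ih (by omega), dnk_sub_two_mul_succ n i h]
    omega

/-- **Theorem 4.2.** `∑_{k=0}^n d_{n,k} = C(n, ⌊n/2⌋)`. -/
theorem sum_dnk (n : ℕ) :
    ∑ k ∈ Finset.range (n + 1), dnk n k = Nat.choose n (n / 2) := by
  rw [← sum_range_reflect, Finset.sum_range_succ_eq_sum_range_two_mul]
  · simpa using sum_dnk_sub_two_mul n (n / 2) (by omega)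
  · intro k hk hodd
    obtain ⟨j, rfl⟩ := hodd
    exact if_neg (by omega)
end

section
/- (Theorem 4.3) For every n ≥ 0, ∑_{k=0}^{n} (k+1) · d_{n,k} = 2^n. -/
lemma key_int (n j : ℕ) (hj : 2 * j ≤ n) :
    ((n : ℤ) + 1) * (Nat.choose n j) - ((n : ℤ) + 1) * (Nat.choose n (n + 1 - j))
      = ((n : ℤ) + 1 - 2 * j) * Nat.choose (n + 1) j := by
  rcases Nat.eq_zero_or_pos j with rfl | hj0
  · simp [Nat.choose_eq_zero_of_lt (by omega : n < n + 1 - 0)]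
  · obtain ⟨i, rfl⟩ : ∃ i, j = i + 1 := ⟨j - 1, by omega⟩
    have hs : Nat.choose n (n + 1 - (i + 1)) = Nat.choose n i := by
      have h1 : n + 1 - (i + 1) = n - i := by omega
      have h2 : n - (n - i) = i := by omega
      rw [h1, ← h2, Nat.choose_symm (by omega)]
    have e1 : (n + 1) * Nat.choose n i = Nat.choose (n + 1) (i + 1) * (i + 1) :=
      Nat.add_one_mul_choose_eq n i
    have e2 : Nat.choose n (i + 1) * (n + 1) = Nat.choose (n + 1) (i + 1) * (n + 1 - (i + 1)) :=
      Nat.choose_mul_succ_eq n (i + 1)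
    have h3 : ((n + 1 - (i + 1) : ℕ) : ℤ) = (n : ℤ) - i := by
      have h1 : n + 1 - (i + 1) = n - i := by omega
      rw [h1, Nat.cast_sub (by omega : i ≤ n)]
    rw [hs]
    have e1' : ((n : ℤ) + 1) * Nat.choose n i = Nat.choose (n + 1) (i + 1) * (i + 1) := by
      exact_mod_cast congrArg (Nat.cast : ℕ → ℤ) e1
    have e2' : (Nat.choose n (i + 1) : ℤ) * (n + 1)
        = Nat.choose (n + 1) (i + 1) * ((n : ℤ) - i) := by
      rw [← h3]; exact_mod_cast congrArg (Nat.cast : ℕ → ℤ) e2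
    push_cast
    linarith

lemma choose_anti (n j : ℕ) (hj : 2 * j ≤ n) :
    Nat.choose n (n + 1 - j) ≤ Nat.choose n j := by
  have h := key_int n j hj
  have h2 : (0 : ℤ) ≤ ((n : ℤ) + 1 - 2 * j) * Nat.choose (n + 1) j :=
    mul_nonneg (by push_cast; omega) (by positivity)
  have h3 : ((n : ℤ) + 1) * Nat.choose n (n + 1 - j) ≤ ((n : ℤ) + 1) * Nat.choose n j := by
    linarith
  have h4 : (Nat.choose n (n + 1 - j) : ℤ) ≤ Nat.choose n j :=
    le_of_mul_le_mul_left (by linarith) (by positivity : (0 : ℤ) < (n : ℤ) + 1)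
  exact_mod_cast h4

lemma dnk_closed (n j : ℕ) (hj : 2 * j ≤ n) :
    dnk n (n - 2 * j) = Nat.choose n j - Nat.choose n (n + 1 - j) := by
  have h1 : n - (n - 2 * j) = 2 * j := by omega
  rw [dnk, if_pos ⟨by omega, by rw [h1]; omega⟩, h1]
  have h2 : 2 * j / 2 = j := by omega
  rw [h2]
  apply Nat.div_eq_of_eq_mul_left (by omega : 0 < n + 1)
  have hle := choose_anti n j hj
  have hk := key_int n j hj
  zify [hle, hj]
  push_cast [Nat.cast_sub hle] at hk ⊢
  nlinarith [hk]

lemma half_sum_even (m : ℕ) :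
    2 ^ (2 * m) + Nat.choose (2 * m) m
      = 2 * ∑ j ∈ Finset.range (m + 1), Nat.choose (2 * m) j := by
  have h1 : ∑ j ∈ Finset.range (2 * m + 1), Nat.choose (2 * m) j = 2 ^ (2 * m) :=
    Nat.sum_range_choose (2 * m)
  have h2 : ∑ j ∈ Finset.range (2 * m + 1), Nat.choose (2 * m) j
      = ∑ j ∈ Finset.range (m + 1), Nat.choose (2 * m) j
        + ∑ j ∈ Finset.range m, Nat.choose (2 * m) (m + 1 + j) := by
    have : 2 * m + 1 = (m + 1) + m := by omega
    rw [this, Finset.sum_range_add]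
  have h3 : ∀ j ∈ Finset.range m, Nat.choose (2 * m) (m + 1 + j)
      = Nat.choose (2 * m) (m - 1 - j) := by
    intro j hj
    simp only [Finset.mem_range] at hj
    have : m - 1 - j = 2 * m - (m + 1 + j) := by omega
    rw [this, Nat.choose_symm (by omega)]
  rw [Finset.sum_congr rfl h3, Finset.sum_range_reflect (fun j => Nat.choose (2 * m) j) m] at h2
  have h4 : ∑ j ∈ Finset.range (m + 1), Nat.choose (2 * m) j
      = ∑ j ∈ Finset.range m, Nat.choose (2 * m) j + Nat.choose (2 * m) m :=
    Finset.sum_range_succ _ m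
  omega

/-- **Theorem 4.3.** `∑_{k=0}^n (k+1) d_{n,k} = 2^n`. -/
theorem weighted_sum_dnk (n : ℕ) :
    ∑ k ∈ Finset.range (n + 1), (k + 1) * dnk n k = 2 ^ n := by
  classical
  have hfilter : ∑ k ∈ (Finset.range (n + 1)).filter (fun k => (n - k) % 2 = 0),
      (k + 1) * dnk n k = ∑ k ∈ Finset.range (n + 1), (k + 1) * dnk n k := by
    apply Finset.sum_filter_of_ne
    intro k _ hne
    by_contra hp
    apply hne
    rw [dnk, if_neg (by tauto), mul_zero]
  have himg : (Finset.range (n + 1)).filter (fun k => (n - k) % 2 = 0)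
      = (Finset.range (n / 2 + 1)).image (fun j => n - 2 * j) := by
    ext k
    simp only [Finset.mem_filter, Finset.mem_image, Finset.mem_range]
    constructor
    · rintro ⟨hk, hp⟩
      exact ⟨(n - k) / 2, by omega, by omega⟩
    · rintro ⟨j, hj, rfl⟩
      constructor <;> omega
  have hinj : ∀ a ∈ Finset.range (n / 2 + 1), ∀ b ∈ Finset.range (n / 2 + 1),
      n - 2 * a = n - 2 * b → a = b := by
    intro a ha b hb h
    simp only [Finset.mem_range] at ha hb
    omega
  rw [← hfilter, himg, Finset.sum_image hinj]
  have hterm : ∀ j ∈ Finset.range (n / 2 + 1),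
      (n - 2 * j + 1) * dnk n (n - 2 * j)
        = (n - 2 * j + 1) * (Nat.choose n j - Nat.choose n (n + 1 - j)) := by
    intro j hj
    simp only [Finset.mem_range] at hj
    rw [dnk_closed n j (by omega)]
  rw [Finset.sum_congr rfl hterm]
  -- now cast to ℤ and telescope
  set m := n / 2 with hm
  set g : ℕ → ℤ := fun j => ((n : ℤ) + 1 - 2 * j) * (Nat.choose n (n + 1 - j)) with hg
  have hcast : ((∑ j ∈ Finset.range (m + 1),
      (n - 2 * j + 1) * (Nat.choose n j - Nat.choose n (n + 1 - j)) : ℕ) : ℤ)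
      = ∑ j ∈ Finset.range (m + 1), ((g (j + 1) - g j) + 2 * (Nat.choose n j : ℤ)) := by
    rw [Nat.cast_sum]
    apply Finset.sum_congr rfl
    intro j hj
    simp only [Finset.mem_range] at hj
    have hj' : 2 * j ≤ n := by omega
    have hle := choose_anti n j hj'
    rw [Nat.cast_mul, Nat.cast_sub hle, Nat.cast_add, Nat.cast_sub (by omega : 2 * j ≤ n)]
    have hk := key_int n j hj'
    have hsymm : (Nat.choose n (n - j) : ℤ) = Nat.choose n j := by
      exact_mod_cast congrArg (Nat.cast : ℕ → ℤ) (Nat.choose_symm (by omega : j ≤ n))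
    have hgj1 : g (j + 1) = ((n : ℤ) - 1 - 2 * j) * (Nat.choose n (n - j)) := by
      simp only [hg]
      have : n + 1 - (j + 1) = n - j := by omega
      rw [this]
      push_cast
      ring
    rw [hgj1, hsymm]
    simp only [hg]
    push_cast
    ring
  have hg0 : g 0 = 0 := by
    simp [hg, Nat.choose_eq_zero_of_lt (by omega : n < n + 1)]
  have htel : ∑ j ∈ Finset.range (m + 1), (g (j + 1) - g j) = g (m + 1) :=
    by rw [Finset.sum_range_sub g (m + 1), hg0, sub_zero]
  rw [Finset.sum_add_distrib, htel, ← Finset.mul_sum] at hcast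
  -- split on parity
  have key : ((∑ j ∈ Finset.range (m + 1),
      (n - 2 * j + 1) * (Nat.choose n j - Nat.choose n (n + 1 - j)) : ℕ) : ℤ) = 2 ^ n := by
    rw [hcast]
    rcases Nat.even_or_odd n with ⟨t, ht⟩ | ⟨t, ht⟩
    · -- n = 2t, m = t
      have hmt : m = t := by omega
      have hgm : g (m + 1) = -(Nat.choose n t : ℤ) := by
        simp only [hg, hmt]
        have h1 : n + 1 - (t + 1) = t := by omega
        rw [h1]
        have : ((n : ℤ) + 1 - 2 * ((t : ℤ) + 1)) = -1 := by push_cast; omega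
        push_cast
        rw [show ((n:ℤ) + 1 - 2 * ((t:ℤ) + 1)) = -1 by push_cast [ht]; ring]
        ring
      have hhalf := half_sum_even t
      have hn2t : n = 2 * t := by omega
      rw [hgm, hmt]
      have hhalf' : (2:ℤ) ^ (2 * t) + Nat.choose (2 * t) t
          = 2 * ∑ j ∈ Finset.range (t + 1), (Nat.choose (2 * t) j : ℤ) := by
        exact_mod_cast congrArg (Nat.cast : ℕ → ℤ) hhalf
      rw [hn2t] at *
      push_cast at hhalf' ⊢
      linarith
    · -- n = 2t + 1, m = t
      have hmt : m = t := by omega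
      have hgm : g (m + 1) = 0 := by
        simp only [hg, hmt]
        have : ((n : ℤ) + 1 - 2 * ((t : ℤ) + 1)) = 0 := by push_cast [ht]; ring
        push_cast
        rw [show ((n:ℤ) + 1 - 2 * ((t:ℤ) + 1)) = 0 by push_cast [ht]; ring]
        ring
      have hhalf := Nat.sum_range_choose_halfway t
      have hn : n = 2 * t + 1 := by omega
      rw [hgm, hmt, zero_add]
      have hhalf' : (∑ j ∈ Finset.range (t + 1), (Nat.choose (2 * t + 1) j : ℤ)) = 4 ^ t := by
        exact_mod_cast congrArg (Nat.cast : ℕ → ℤ) hhalf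
      rw [hn, hhalf']
      rw [show (4:ℤ) ^ t = 2 ^ (2 * t) by rw [show (4:ℤ) = 2 ^ 2 by norm_num, ← pow_mul]]
      ring
  exact_mod_cast key
end

section
/- (Theorem 4.7) For every n ≥ 0, ∑_{k=0}^{n} s_{n,k} = p_{n+1}, where p is the Pell sequence; equivalently, the number of free symmetric Schröder paths of length 2n equals the Pell number p_{n+1}. -/
/-!
Writing `m = k + j`, the double sum becomes `∑_m ∑_k C(m,k) C(m-k, n-m)`. As
`C(m,k) C(m-k,h) = C(m,h) C(m-h,k)`, the inner sum is `C(m, n-m) 2^(2m-n)`, so the total is the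
weighted diagonal sum `∑_{i+j=n} C(i,j) 2^(i-j)` of Pascal's triangle. Pascal's rule gives these
diagonal sums the Pell recurrence, just as the unweighted ones satisfy the Fibonacci recurrence
(`Nat.fib_succ_eq_sum_choose`).
-/

/-- `s_{n,k} = ∑_{j=0}^{n-k} C(k+j,k) * C(j, n-j-k)` for `k ≤ n`, and `0` for `k > n`. -/
def snk (n k : ℕ) : ℕ :=
  if k ≤ n then
    ∑ j ∈ Finset.range (n - k + 1), Nat.choose (k + j) k * Nat.choose j (n - j - k)
  else 0

/-- The Pell numbers: `p_0 = 0`, `p_1 = 1`, `p_{n+2} = 2 p_{n+1} + p_n`. -/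
def pell : ℕ → ℕ
  | 0 => 0
  | 1 => 1
  | n + 2 => 2 * pell (n + 1) + pell n

open Finset

namespace Nat

lemma choose_mul_choose_sub_eq_zero {m k h : ℕ} (hm : m < k + h) :
    m.choose k * (m - k).choose h = 0 := by
  rcases le_or_gt k m with hk | hk
  · rw [choose_eq_zero_of_lt (by omega : m - k < h), mul_zero]
  · rw [choose_eq_zero_of_lt hk, zero_mul]

lemma choose_mul_choose_sub_comm (m k h : ℕ) :
    m.choose k * (m - k).choose h = m.choose h * (m - h).choose k := by
  rcases le_or_gt (k + h) m with hm | hm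
  · have hk := choose_mul (n := m) (Nat.le_add_right k h)
    have hh := choose_mul (n := m) (Nat.le_add_left h k)
    rw [Nat.add_sub_cancel_left] at hk
    rw [Nat.add_sub_cancel] at hh
    rw [← hk, ← hh, choose_symm_add]
  · rw [choose_mul_choose_sub_eq_zero hm, choose_mul_choose_sub_eq_zero (by omega)]

lemma sum_range_choose_of_le {n N : ℕ} (h : n ≤ N) :
    ∑ k ∈ range (N + 1), n.choose k = 2 ^ n := by
  rw [← sum_range_choose]
  refine (sum_subset (range_subset_range.2 (by omega)) fun k _ hk => ?_).symm
  exact choose_eq_zero_of_lt (by simpa using hk)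

lemma sum_range_choose_mul_choose_sub (m h : ℕ) :
    ∑ k ∈ range (m + 1), m.choose k * (m - k).choose h = m.choose h * 2 ^ (m - h) := by
  simp_rw [choose_mul_choose_sub_comm m _ h, ← mul_sum, sum_range_choose_of_le (Nat.sub_le m h)]

end Nat

section DiagonalChooseSum

variable {R : Type*} [CommSemiring R]

def diagonalChooseSum (a : R) (n : ℕ) : R :=
  ∑ p ∈ antidiagonal n, p.1.choose p.2 * a ^ (p.1 - p.2)

lemma choose_succ_mul_pow_sub (a : R) (i j : ℕ) :
    (i.choose (j + 1) : R) * a ^ (i - j) = a * (i.choose (j + 1) * a ^ (i - (j + 1))) := by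
  rcases lt_or_ge i (j + 1) with hi | hi
  · simp [Nat.choose_eq_zero_of_lt hi]
  · rw [show i - j = i - (j + 1) + 1 by omega, pow_succ]
    ring

lemma diagonalChooseSum_add_two (a : R) (n : ℕ) :
    diagonalChooseSum a (n + 2) = a * diagonalChooseSum a (n + 1) + diagonalChooseSum a n := by
  have h2 : diagonalChooseSum a (n + 2) = a ^ (n + 2) +
      ∑ p ∈ antidiagonal n, ((p.1.choose p.2 : R) + p.1.choose (p.2 + 1)) * a ^ (p.1 - p.2) := by
    simp [diagonalChooseSum, Nat.antidiagonal_succ_succ', Nat.choose_succ_succ]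
  have h1 : diagonalChooseSum a (n + 1) = a ^ (n + 1) +
      ∑ p ∈ antidiagonal n, (p.1.choose (p.2 + 1) : R) * a ^ (p.1 - (p.2 + 1)) := by
    simp [diagonalChooseSum, Nat.antidiagonal_succ']
  rw [h2, h1, diagonalChooseSum, mul_add, mul_sum, ← pow_succ']
  simp only [← choose_succ_mul_pow_sub, add_mul, sum_add_distrib]
  ring

end DiagonalChooseSum

lemma pell_succ_eq_diagonalChooseSum (n : ℕ) : pell (n + 1) = diagonalChooseSum 2 n :=
  Nat.twoStepInduction rfl rfl (fun n h0 h1 => by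
    rw [diagonalChooseSum_add_two, ← h0, ← h1, pell]) n

lemma sum_snk_eq_sum_range_choose_mul_choose_sub (n : ℕ) :
    ∑ k ∈ range (n + 1), snk n k
      = ∑ m ∈ range (n + 1), ∑ k ∈ range (m + 1), m.choose k * (m - k).choose (n - m) := by
  calc ∑ k ∈ range (n + 1), snk n k
      = ∑ k ∈ range (n + 1), ∑ j ∈ range (n + 1 - k),
          (k + j).choose k * j.choose (n - j - k) := by
        refine sum_congr rfl fun k hk => ?_
        have hkn : k ≤ n := Nat.lt_succ_iff.1 (mem_range.1 hk)
        rw [snk, if_pos hkn, Nat.succ_sub hkn]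
    _ = ∑ m ∈ range (n + 1), ∑ k ∈ range (m + 1),
          (k + (m - k)).choose k * (m - k).choose (n - (m - k) - k) :=
        (sum_range_diag_flip _ _).symm
    _ = _ := by
        refine sum_congr rfl fun m hm => sum_congr rfl fun k hk => ?_
        simp only [mem_range] at hm hk
        rw [show k + (m - k) = m by omega, show n - (m - k) - k = n - m by omega]

/-- **Theorem 4.7.** `∑_{k=0}^n s_{n,k} = p_{n+1}`, the `(n+1)`-st Pell number. -/
theorem sum_snk_eq_pell (n : ℕ) :
    ∑ k ∈ Finset.range (n + 1), snk n k = pell (n + 1) := by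
  rw [sum_snk_eq_sum_range_choose_mul_choose_sub, pell_succ_eq_diagonalChooseSum,
    diagonalChooseSum, Nat.sum_antidiagonal_eq_sum_range_succ_mk]
  simp only [Nat.sum_range_choose_mul_choose_sub, Nat.cast_id]
end

section
/- In the ring ℤ[[X]] of formal power series, let C₂ := ∑_{m≥0} Cat_m X^{2m} (the Catalan generating function evaluated at X²) and let G := ∑_{n≥0} 2^n X^n. Then (1 − X·C₂)² · G = C₂; that is, 1/(1−2x) = C(x²)/(1 − x·C(x²))². -/
open PowerSeries

/-- `C₂ = C(X²) = ∑_{m≥0} Cat_m X^{2m}`, the Catalan generating function at `X²`. -/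
noncomputable def C₂ : PowerSeries ℤ :=
  PowerSeries.mk fun n => if Even n then (catalan (n / 2) : ℤ) else 0

/-- `G = 1/(1-2X) = ∑_{n≥0} 2^n X^n`. -/
noncomputable def G : PowerSeries ℤ :=
  PowerSeries.mk fun n => (2 : ℤ) ^ n

/-! Substituting `X ↦ X²` into the Catalan equation `C = 1 + X C²` gives `c = 1 + x²c²` for
`c = C₂`, `x = X`. Hence `(1 - xc)² = 1 - 2xc + x²c² = (1 - 2x)c`, and the factor `1 - 2x` is
cancelled by `G = 1/(1 - 2X)`. -/

theorem one_sub_mul_sq_eq_of_sq_mul_sq_add_one {R : Type*} [CommRing R] {x c : R}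
    (h : c ^ 2 * x ^ 2 + 1 = c) : (1 - x * c) ^ 2 = (1 - 2 * x) * c := by
  linear_combination h

theorem C₂_eq_expand_catalanSeries :
    C₂ = expand 2 two_ne_zero (map (Nat.castRingHom ℤ) catalanSeries) := by
  ext n
  simp [C₂, coeff_expand, even_iff_two_dvd]

theorem C₂_sq_mul_X_sq_add_one : C₂ ^ 2 * X ^ 2 + 1 = C₂ := by
  have h := congrArg (fun f => expand 2 two_ne_zero (map (Nat.castRingHom ℤ) f))
    catalanSeries_sq_mul_X_add_one
  simpa only [map_add, map_mul, map_pow, map_X, map_one, expand_X, ← C₂_eq_expand_catalanSeries]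
    using h

theorem G_eq_rescale_two : G = rescale 2 (mk 1) := by
  rw [rescale_mk]
  simp [G]

theorem one_sub_two_mul_X_mul_G : (1 - 2 * X) * G = 1 := by
  rw [G_eq_rescale_two, ← map_ofNat C 2, ← rescale_X, ← map_one (rescale (2 : ℤ)), ← map_sub,
    ← map_mul, mul_comm, mk_one_mul_one_sub_eq_one]

/-- In `ℤ⟦X⟧`: `(1 - X·C(X²))² · (1/(1-2X)) = C(X²)`, i.e.
`1/(1-2x) = C(x²)/(1 - x·C(x²))²`. -/
theorem one_sub_two_x_inv_eq :
    (1 - PowerSeries.X * C₂) ^ 2 * G = C₂ := by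
  rw [one_sub_mul_sq_eq_of_sq_mul_sq_add_one C₂_sq_mul_X_sq_add_one, mul_right_comm,
    one_sub_two_mul_X_mul_G, one_mul]
end
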